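/- In the string group L(p1,...,pt) with relations pi·xi = c, the dualizing element ω = (t-2)·c - Σ xi is a torsion element if and only if Σ_{i=1}^t 1/pi = t - 2 (as rational numbers). -/

import Mathlib

/-- Relations subgroup for the string group of weight type `p`:
generated by the elements `p i • x i - p 0 • x 0`. -/
noncomputable def stringRels (t : ℕ) (p : Fin (t + 1) → ℕ) :
    AddSubgroup (Fin (t + 1) →₀ ℤ) :=
  AddSubgroup.closure (Set.range fun i : Fin (t + 1) =>
    Finsupp.single i (p i : ℤ) - Finsupp.single 0 (p 0 : ℤ))

/-- The string group `L(p)`. -/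
abbrev StringGroup (t : ℕ) (p : Fin (t + 1) → ℕ) :=
  (Fin (t + 1) →₀ ℤ) ⧸ stringRels t p

/-- The generator `x_i` of the string group. -/
noncomputable def gen (t : ℕ) (p : Fin (t + 1) → ℕ) (i : Fin (t + 1)) :
    StringGroup t p :=
  QuotientAddGroup.mk (Finsupp.single i 1)

/-- The canonical element `c = p_i • x_i` of the string group. -/
noncomputable def can (t : ℕ) (p : Fin (t + 1) → ℕ) : StringGroup t p :=
  (p 0 : ℤ) • gen t p 0

/-!
The assignment `x i ↦ 1 / p i` defines a homomorphism `weight : L(p) → ℚ` with `weight c = 1`,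
and its kernel is exactly the torsion subgroup: `ℚ` is torsion-free, and conversely, with
`N = ∏ p i`, every `N • x` is a multiple `k • c` of `c`, where comparing weights forces
`k = N * weight x`. Since `weight ω = (t - 2) - ∑ 1 / p i`, the theorem follows.
-/

namespace StringGroup

variable {t : ℕ} {p : Fin (t + 1) → ℕ}

lemma zsmul_gen_eq_can (i : Fin (t + 1)) : (p i : ℤ) • gen t p i = can t p := by
  rw [can, ← sub_eq_zero, gen, gen, ← QuotientAddGroup.mk_zsmul, ← QuotientAddGroup.mk_zsmul,
    ← QuotientAddGroup.mk_sub, QuotientAddGroup.eq_zero_iff, Finsupp.smul_single_one,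
    Finsupp.smul_single_one]
  exact AddSubgroup.subset_closure ⟨i, rfl⟩

lemma prod_nsmul_mem_zmultiples_can (x : StringGroup t p) :
    (∏ i, p i) • x ∈ AddSubgroup.zmultiples (can t p) := by
  induction x using QuotientAddGroup.induction_on with | H f => ?_
  induction f using Finsupp.induction_linear with
  | zero => simp
  | add f g hf hg => rw [QuotientAddGroup.mk_add, nsmul_add]; exact add_mem hf hg
  | single i n =>
    obtain ⟨m, hm⟩ := Finset.dvd_prod_of_mem p (Finset.mem_univ i)
    refine AddSubgroup.mem_zmultiples_iff.mpr ⟨n * m, ?_⟩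
    rw [← Finsupp.smul_single_one, QuotientAddGroup.mk_zsmul, ← gen, hm, ← zsmul_gen_eq_can,
      ← natCast_zsmul, smul_smul, smul_smul]
    congr 1
    push_cast
    ring

noncomputable def weight (hp : ∀ i, p i ≠ 0) : StringGroup t p →+ ℚ :=
  QuotientAddGroup.lift _ (Finsupp.liftAddHom fun i => zmultiplesHom ℚ (p i : ℚ)⁻¹) <| by
    rw [stringRels, AddSubgroup.closure_le]
    rintro _ ⟨i, rfl⟩
    simp [map_sub, hp]

variable (hp : ∀ i, p i ≠ 0)

@[simp]
lemma weight_gen (i : Fin (t + 1)) : weight hp (gen t p i) = (p i : ℚ)⁻¹ := by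
  simp [weight, gen]

@[simp]
lemma weight_can : weight hp (can t p) = 1 := by
  simp [can, hp]

lemma isOfFinAddOrder_iff_weight_eq_zero (x : StringGroup t p) :
    IsOfFinAddOrder x ↔ weight hp x = 0 := by
  refine ⟨fun hx => (isOfFinAddOrder_iff_eq_zero _).mp ((weight hp).isOfFinAddOrder hx),
    fun hx => ?_⟩
  obtain ⟨k, hk⟩ := AddSubgroup.mem_zmultiples_iff.mp (prod_nsmul_mem_zmultiples_can x)
  have hk0 : (k : ℚ) = 0 := by simpa [hx] using congrArg (weight hp) hk
  refine isOfFinAddOrder_iff_nsmul_eq_zero.mpr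
    ⟨∏ i, p i, Nat.pos_of_ne_zero (Finset.prod_ne_zero_iff.mpr fun i _ => hp i), ?_⟩
  rw [← hk, Int.cast_eq_zero.mp hk0, zero_zsmul]

end StringGroup

theorem stmt_19 (t : ℕ) (p : Fin (t + 1) → ℕ) (hp : ∀ i, 2 ≤ p i) :
    IsOfFinAddOrder
      (((t : ℤ) + 1 - 2) • can t p - ∑ i, gen t p i) ↔
      ∑ i, ((p i : ℚ))⁻¹ = ((t : ℚ) + 1) - 2 := by
  have hp₀ : ∀ i, p i ≠ 0 := fun i => by have := hp i; omega
  rw [StringGroup.isOfFinAddOrder_iff_weight_eq_zero hp₀]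
  simp only [map_sub, map_zsmul, map_sum, StringGroup.weight_can, StringGroup.weight_gen]
  rw [sub_eq_zero, eq_comm, zsmul_eq_mul, mul_one]
  norm_cast
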